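/- Let H(x) = -(1/(1-x))·√(x/(1-x)) for x ∈ (0,1) (units R_s = 1) and let G(x) = -(Q₁+2)/(2y) - Q₁/(2x) for fixed y > 0, Q₁ > 0 (taking ℓ = y, ℓ₀ = x). Then the set S = {x ∈ (0,1) : H(x) ≤ G(x)} is nonempty, and is of the form [x_min(y,Q₁), 1) for some x_min ∈ (0,1); moreover x_min is nonincreasing in y. -/
import Mathlib

open Real Set

private lemma one_le_sqrt' {a : ℝ} (h : 1 ≤ a) : 1 ≤ Real.sqrt a :=
  Real.sqrt_one ▸ Real.sqrt_le_sqrt h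

private lemma sqrt_le_one' {a : ℝ} (h : a ≤ 1) : Real.sqrt a ≤ 1 :=
  Real.sqrt_one ▸ Real.sqrt_le_sqrt h

private lemma H_anti {a b : ℝ} (ha : 0 < a) (hab : a ≤ b) (hb : b < 1) :
    -(1 / (1 - b)) * Real.sqrt (b / (1 - b)) ≤ -(1 / (1 - a)) * Real.sqrt (a / (1 - a)) := by
  have ha1 : (0:ℝ) < 1 - a := by linarith
  have hb1 : (0:ℝ) < 1 - b := by linarith
  have h1 : 1 / (1 - a) ≤ 1 / (1 - b) := by
    apply one_div_le_one_div_of_le hb1; linarith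
  have h2 : a / (1 - a) ≤ b / (1 - b) := by
    rw [div_le_div_iff₀ ha1 hb1]; nlinarith
  have h3 : Real.sqrt (a / (1 - a)) ≤ Real.sqrt (b / (1 - b)) := Real.sqrt_le_sqrt h2
  have h4 : 0 ≤ Real.sqrt (a / (1 - a)) := Real.sqrt_nonneg _
  have h5 : 0 ≤ 1 / (1 - a) := by positivity
  nlinarith

private lemma nonempty_S (Q₁ : ℝ) (hQ₁ : 0 < Q₁) (y : ℝ) (hy : 0 < y) :
    ∃ x, x ∈ Ioo (0:ℝ) 1 ∧
      -(1 / (1 - x)) * Real.sqrt (x / (1 - x)) ≤ -(Q₁ + 2) / (2 * y) - Q₁ / (2 * x) := by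
  obtain ⟨C, hC⟩ : ∃ C : ℝ, C = (Q₁ + 2) / (2 * y) + Q₁ := ⟨_, rfl⟩
  have hCpos : 0 < C := by rw [hC]; positivity
  have hC2 : (0:ℝ) < C + 2 := by linarith
  obtain ⟨x, hx⟩ : ∃ x : ℝ, x = 1 - 1 / (C + 2) := ⟨_, rfl⟩
  have h2 : 1 / (C + 2) ≤ 1 / 2 := by
    apply one_div_le_one_div_of_le (by norm_num); linarith
  have hpos : 0 < 1 / (C + 2) := by positivity
  have hxhalf : (1:ℝ)/2 ≤ x := by rw [hx]; linarith
  have hx1 : 1 - x = 1 / (C + 2) := by rw [hx]; ring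
  have hx1pos : 0 < 1 - x := by rw [hx1]; positivity
  have hxlt1 : x < 1 := by linarith
  have hxpos : 0 < x := by linarith
  refine ⟨x, ⟨hxpos, hxlt1⟩, ?_⟩
  have hs : (1:ℝ) ≤ Real.sqrt (x / (1 - x)) := by
    apply one_le_sqrt'
    rw [le_div_iff₀ hx1pos]; linarith
  have hinv : 1 / (1 - x) = C + 2 := by
    rw [hx1]; field_simp
  have hH : -(1 / (1 - x)) * Real.sqrt (x / (1 - x)) ≤ -(C + 2) := by
    rw [hinv]
    nlinarith [mul_nonneg hC2.le (show 0 ≤ Real.sqrt (x / (1 - x)) - 1 by linarith)]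
  have hG : -C ≤ -(Q₁ + 2) / (2 * y) - Q₁ / (2 * x) := by
    have hq : Q₁ / (2 * x) ≤ Q₁ := by
      rw [div_le_iff₀ (by linarith)]
      nlinarith [mul_le_mul_of_nonneg_left hxhalf hQ₁.le]
    rw [hC, neg_add, neg_div]
    linarith
  linarith

private lemma lower_bound_S (Q₁ : ℝ) (hQ₁ : 0 < Q₁) (y : ℝ) (hy : 0 < y) {x : ℝ}
    (hx : x ∈ Ioo (0:ℝ) 1)
    (h : -(1 / (1 - x)) * Real.sqrt (x / (1 - x)) ≤ -(Q₁ + 2) / (2 * y) - Q₁ / (2 * x)) :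
    min (1/2) (Q₁/4) ≤ x := by
  by_contra hcon
  push_neg at hcon
  obtain ⟨hx0, hx1⟩ := hx
  have hxh : x < 1/2 := lt_of_lt_of_le hcon (min_le_left _ _)
  have hxq : x < Q₁/4 := lt_of_lt_of_le hcon (min_le_right _ _)
  have h1x : (0:ℝ) < 1 - x := by linarith
  have hinv : 1 / (1 - x) ≤ 2 := by
    rw [div_le_iff₀ h1x]; linarith
  have hrat : x / (1 - x) ≤ 1 := by
    rw [div_le_one h1x]; linarith
  have hs : Real.sqrt (x / (1 - x)) ≤ 1 := sqrt_le_one' hrat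
  have hsn : 0 ≤ Real.sqrt (x / (1 - x)) := Real.sqrt_nonneg _
  have hinvn : 0 ≤ 1 / (1 - x) := by positivity
  have hH : (-2:ℝ) ≤ -(1 / (1 - x)) * Real.sqrt (x / (1 - x)) := by nlinarith
  have hGy : -(Q₁ + 2) / (2 * y) ≤ 0 := by
    apply div_nonpos_of_nonpos_of_nonneg <;> linarith
  have hQx : 2 < Q₁ / (2 * x) := by
    rw [lt_div_iff₀ (by linarith)]; linarith
  linarith

/-- with `H(x) = -(1/(1-x))√(x/(1-x))` and
`G_y(x) = -(Q₁+2)/(2y) - Q₁/(2x)`, the admissible set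
`S_y = {x ∈ (0,1) : H x ≤ G_y x}` is a nonempty interval of the form `[x_min, 1)`,
and `x_min` is nonincreasing in `y`. -/
theorem admissible_spheres_interval (Q₁ : ℝ) (hQ₁ : 0 < Q₁) :
    (∀ y : ℝ, 0 < y →
      ∃ xmin ∈ Ioo (0:ℝ) 1,
        {x : ℝ | x ∈ Ioo (0:ℝ) 1 ∧
            -(1 / (1 - x)) * Real.sqrt (x / (1 - x)) ≤ -(Q₁ + 2) / (2 * y) - Q₁ / (2 * x)}
          = Ico xmin 1) ∧
    ∀ y₁ y₂ xmin₁ xmin₂ : ℝ, 0 < y₁ → y₁ ≤ y₂ →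
      {x : ℝ | x ∈ Ioo (0:ℝ) 1 ∧
          -(1 / (1 - x)) * Real.sqrt (x / (1 - x)) ≤ -(Q₁ + 2) / (2 * y₁) - Q₁ / (2 * x)}
        = Ico xmin₁ 1 →
      {x : ℝ | x ∈ Ioo (0:ℝ) 1 ∧
          -(1 / (1 - x)) * Real.sqrt (x / (1 - x)) ≤ -(Q₁ + 2) / (2 * y₂) - Q₁ / (2 * x)}
        = Ico xmin₂ 1 →
      xmin₂ ≤ xmin₁ := by
  constructor
  · intro y hy
    set S : Set ℝ := {x : ℝ | x ∈ Ioo (0:ℝ) 1 ∧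
        -(1 / (1 - x)) * Real.sqrt (x / (1 - x)) ≤ -(Q₁ + 2) / (2 * y) - Q₁ / (2 * x)} with hS
    have hne : S.Nonempty := by
      obtain ⟨x, hx⟩ := nonempty_S Q₁ hQ₁ y hy
      exact ⟨x, hx⟩
    have hbdd : BddBelow S := ⟨min (1/2) (Q₁/4), fun x hx => lower_bound_S Q₁ hQ₁ y hy hx.1 hx.2⟩
    set m := sInf S with hm
    have hmlb : min (1/2) (Q₁/4) ≤ m :=
      le_csInf hne (fun x hx => lower_bound_S Q₁ hQ₁ y hy hx.1 hx.2)
    have hm0 : 0 < m := lt_of_lt_of_le (by positivity) hmlb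
    obtain ⟨s₀, hs₀⟩ := hne
    have hne' : S.Nonempty := ⟨s₀, hs₀⟩
    have hm1 : m < 1 := lt_of_le_of_lt (csInf_le hbdd hs₀) hs₀.1.2
    have hclosure : ∀ s ∈ S, ∀ x, s ≤ x → x < 1 → x ∈ S := by
      intro s hs x hsx hx1
      obtain ⟨⟨hs0, hs1⟩, hsle⟩ := hs
      have hx0 : 0 < x := lt_of_lt_of_le hs0 hsx
      refine ⟨⟨hx0, hx1⟩, ?_⟩
      have hHx : -(1 / (1 - x)) * Real.sqrt (x / (1 - x)) ≤
          -(1 / (1 - s)) * Real.sqrt (s / (1 - s)) := H_anti hs0 hsx hx1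
      have hGx : Q₁ / (2 * x) ≤ Q₁ / (2 * s) :=
        div_le_div_of_nonneg_left hQ₁.le (by linarith) (by linarith)
      linarith
    refine ⟨m, ⟨hm0, hm1⟩, ?_⟩
    apply Subset.antisymm
    · intro x hx
      exact ⟨csInf_le hbdd hx, hx.1.2⟩
    · intro x ⟨hxm, hx1⟩
      rcases eq_or_lt_of_le hxm with heq | hlt
      · -- x = m : continuity argument
        cases heq
        by_contra hxS
        set f : ℝ → ℝ := fun z => (-(Q₁ + 2) / (2 * y) - Q₁ / (2 * z)) -
            (-(1 / (1 - z)) * Real.sqrt (z / (1 - z))) with hf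
        have hfx : f m < 0 := by
          simp only [hf]
          by_contra hge
          push_neg at hge
          exact hxS ⟨⟨hm0, hx1⟩, by linarith⟩
        have hcont : ContinuousAt f m := by
          apply ContinuousAt.sub
          · apply ContinuousAt.sub continuousAt_const
            exact ContinuousAt.div continuousAt_const (by fun_prop)
              (ne_of_gt (by positivity))
          · apply ContinuousAt.mul
            · apply ContinuousAt.neg
              exact ContinuousAt.div continuousAt_const (by fun_prop)
                (ne_of_gt (show (0:ℝ) < 1 - m by linarith))
            · apply ContinuousAt.comp Real.continuous_sqrt.continuousAt
              exact ContinuousAt.div (by fun_prop) (by fun_prop)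
                (ne_of_gt (show (0:ℝ) < 1 - m by linarith))
        have hev : ∀ᶠ z in nhds m, f z < 0 := hcont.eventually_lt_const hfx
        rw [Metric.eventually_nhds_iff] at hev
        obtain ⟨ε, hε, hball⟩ := hev
        obtain ⟨s, hsS, hslt⟩ :=
          exists_lt_of_csInf_lt hne' (show sInf S < m + ε by rw [← hm]; linarith)
        have hsx : m ≤ s := csInf_le hbdd hsS
        have hfs : f s < 0 := hball (by rw [Real.dist_eq, abs_lt]; constructor <;> linarith)
        simp only [hf] at hfs
        have := hsS.2
        linarith
      · obtain ⟨s, hsS, hslt⟩ := exists_lt_of_csInf_lt hne' (hm ▸ hlt)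
        exact hclosure s hsS x (le_of_lt hslt) hx1
  · intro y₁ y₂ xmin₁ xmin₂ hy₁ hy₁₂ h₁ h₂
    have hy₂ : 0 < y₂ := lt_of_lt_of_le hy₁ hy₁₂
    have hsub : {x : ℝ | x ∈ Ioo (0:ℝ) 1 ∧
        -(1 / (1 - x)) * Real.sqrt (x / (1 - x)) ≤ -(Q₁ + 2) / (2 * y₁) - Q₁ / (2 * x)} ⊆
        {x : ℝ | x ∈ Ioo (0:ℝ) 1 ∧
        -(1 / (1 - x)) * Real.sqrt (x / (1 - x)) ≤ -(Q₁ + 2) / (2 * y₂) - Q₁ / (2 * x)} := by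
      intro x ⟨hx, hle⟩
      refine ⟨hx, ?_⟩
      have hd : (Q₁ + 2) / (2 * y₂) ≤ (Q₁ + 2) / (2 * y₁) :=
        div_le_div_of_nonneg_left (by linarith) (by linarith) (by linarith)
      have hneg : -(Q₁ + 2) / (2 * y₁) ≤ -(Q₁ + 2) / (2 * y₂) := by
        rw [neg_div, neg_div]; linarith
      linarith
    rw [h₁, h₂] at hsub
    obtain ⟨x, hx⟩ := nonempty_S Q₁ hQ₁ y₁ hy₁
    have hxI : x ∈ Ico xmin₁ 1 := h₁ ▸ hx
    have hmem : xmin₁ ∈ Ico xmin₁ 1 := ⟨le_refl _, lt_of_le_of_lt hxI.1 hxI.2⟩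
    exact (hsub hmem).1
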